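/- arXiv:2008.13747 — 3 statements merged into one kernel-verified Lean document; each statement's English description precedes it below -/
import Mathlib

section
/- Let D be a finite digraph with no two arcs having the same ordered pair of endpoints, and suppose there is a vertex c of D such that every vertex of D is the endpoint of an alternating walk from c of some even length and also of an alternating walk from c of some odd length. Then D has at least 2|V(D)| − 1 arcs. -/
/-- `AltWalk D c l v`: there is an alternating walk of length `l` from `c` to `v` in
the digraph `D`, i.e. a sequence `w 0 = c, …, w l = v` whose steps are alternately
forward arcs (on even steps, starting with a forward arc) and backward arcs (on odd
steps). -/
def AltWalk {V : Type*} (D : V → V → Prop) (c : V) (l : ℕ) (v : V) : Prop :=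
  ∃ w : ℕ → V, w 0 = c ∧ w l = v ∧
    ∀ i < l, (Even i → D (w i) (w (i + 1))) ∧ (Odd i → D (w (i + 1)) (w i))

/-- If every vertex of a finite digraph `D` is the endpoint of an
alternating walk from `c` of some even length and of an alternating walk from `c` of
some odd length, then `D` has at least `2|V(D)| - 1` arcs. -/
theorem card_arcs_ge_of_alternating_walks {V : Type} [Fintype V]
    (D : V → V → Prop) (c : V)
    (h : ∀ v : V, (∃ l, Even l ∧ AltWalk D c l v) ∧ (∃ l, Odd l ∧ AltWalk D c l v)) :
    2 * Fintype.card V - 1 ≤ {p : V × V | D p.1 p.2}.ncard := by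
  classical
  -- for each vertex and parity there is a walk of that parity
  have hex : ∀ v : V, ∀ b : Bool, ∃ l, (l % 2 = if b then 1 else 0) ∧ AltWalk D c l v := by
    intro v b
    cases b with
    | false =>
      obtain ⟨⟨l, hl, hw⟩, _⟩ := h v
      exact ⟨l, by simpa [Nat.even_iff] using hl, hw⟩
    | true =>
      obtain ⟨_, ⟨l, hl, hw⟩⟩ := h v
      exact ⟨l, by simpa [Nat.odd_iff] using hl, hw⟩
  -- minimal length of a walk of parity `b` to `v`
  set m : V → Bool → ℕ := fun v b => Nat.find (hex v b) with hm
  have hspec : ∀ v b, (m v b % 2 = if b then 1 else 0) ∧ AltWalk D c (m v b) v :=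
    fun v b => Nat.find_spec (hex v b)
  have hmin : ∀ v b l, (l % 2 = if b then 1 else 0) → AltWalk D c l v → m v b ≤ l :=
    fun v b l h1 h2 => Nat.find_le ⟨h1, h2⟩
  -- the key lemma: each pair `(v, b) ≠ (c, false)` yields an arc with a decrease property
  have key : ∀ v b, (v, b) ≠ ((c : V), false) → ∃ p : V × V, D p.1 p.2 ∧
      (b = true → p.2 = v ∧ m p.1 false < m v true) ∧
      (b = false → p.1 = v ∧ m p.2 true < m v false) := by
    intro v b hne
    obtain ⟨hpar, w, hw0, hwl, hstep⟩ := hspec v b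
    set l := m v b with hl
    have hl1 : 1 ≤ l := by
      rcases Nat.eq_zero_or_pos l with h0 | h1
      · exfalso
        have hb : b = false := by
          cases b with
          | false => rfl
          | true => simp [h0] at hpar
        apply hne
        have : v = c := by rw [← hw0, ← hwl, h0]
        simp [this, hb]
      · exact h1
    have hlt : l - 1 < l := by omega
    -- truncated walk
    have htrunc : AltWalk D c (l - 1) (w (l - 1)) :=
      ⟨w, hw0, rfl, fun i hi => hstep i (by omega)⟩
    cases b with
    | true =>
      have hlo : l % 2 = 1 := by simpa using hpar
      have heven : Even (l - 1) := by
        rw [Nat.even_iff]; omega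
      have h11 : l - 1 + 1 = l := by omega
      have harc : D (w (l - 1)) (w l) := by
        have := (hstep (l - 1) hlt).1 heven
        rwa [h11] at this
      refine ⟨(w (l - 1), w l), harc, fun _ => ⟨hwl, ?_⟩, by simp⟩
      have hle : m (w (l - 1)) false ≤ l - 1 :=
        hmin _ false (l - 1) (by simp [Nat.even_iff.mp heven]) htrunc
      dsimp only
      omega
    | false =>
      have hlo : l % 2 = 0 := by simpa using hpar
      have hodd : Odd (l - 1) := by
        rw [Nat.odd_iff]; omega
      have h11 : l - 1 + 1 = l := by omega
      have harc : D (w l) (w (l - 1)) := by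
        have := (hstep (l - 1) hlt).2 hodd
        rwa [h11] at this
      refine ⟨(w l, w (l - 1)), harc, by simp, fun _ => ⟨hwl, ?_⟩⟩
      have hle : m (w (l - 1)) true ≤ l - 1 :=
        hmin _ true (l - 1) (by simp [Nat.odd_iff.mp hodd]) htrunc
      dsimp only
      omega
  -- define the arc assignment
  let F : V × Bool → V × V := fun x =>
    if hx : (x.1, x.2) ≠ ((c : V), false) then (key x.1 x.2 hx).choose else (c, c)
  have hFspec : ∀ x : V × Bool, x ≠ (c, false) → D (F x).1 (F x).2 ∧
      (x.2 = true → (F x).2 = x.1 ∧ m (F x).1 false < m x.1 true) ∧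
      (x.2 = false → (F x).1 = x.1 ∧ m (F x).2 true < m x.1 false) := by
    intro x hx
    have hx' : (x.1, x.2) ≠ ((c : V), false) := by simpa using hx
    simp only [F, dif_pos hx']
    exact (key x.1 x.2 hx').choose_spec
  -- count
  set s : Finset (V × Bool) := Finset.univ \ {((c : V), false)} with hs
  set t : Finset (V × V) := {p : V × V | D p.1 p.2}.toFinset with ht
  have hmem : ∀ x ∈ s, F x ∈ t := by
    intro x hx
    have hx' : x ≠ (c, false) := by
      simp only [hs, Finset.mem_sdiff, Finset.mem_singleton] at hx
      exact hx.2
    have := (hFspec x hx').1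
    simpa [ht, Set.mem_toFinset] using this
  have hinj : Set.InjOn F s := by
    intro x hx y hy hxy
    have hx' : x ≠ (c, false) := by
      simp only [hs, Finset.coe_sdiff, Set.mem_diff, Finset.coe_singleton,
        Set.mem_singleton_iff] at hx
      exact hx.2
    have hy' : y ≠ (c, false) := by
      simp only [hs, Finset.coe_sdiff, Set.mem_diff, Finset.coe_singleton,
        Set.mem_singleton_iff] at hy
      exact hy.2
    obtain ⟨_, hxT, hxF⟩ := hFspec x hx'
    obtain ⟨_, hyT, hyF⟩ := hFspec y hy'
    cases hbx : x.2 <;> cases hby : y.2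
    · obtain ⟨h1, _⟩ := hxF hbx
      obtain ⟨h2, _⟩ := hyF hby
      have hv : x.1 = y.1 := by rw [← h1, ← h2, hxy]
      exact Prod.ext hv (hbx.trans hby.symm)
    · exfalso
      obtain ⟨h1, h1'⟩ := hxF hbx
      obtain ⟨h2, h2'⟩ := hyT hby
      rw [← hxy] at h2 h2'
      rw [h1] at h2'
      rw [h2] at h1'
      omega
    · exfalso
      obtain ⟨h1, h1'⟩ := hxT hbx
      obtain ⟨h2, h2'⟩ := hyF hby
      rw [← hxy] at h2 h2'
      rw [h1] at h2'
      rw [h2] at h1'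
      omega
    · obtain ⟨h1, _⟩ := hxT hbx
      obtain ⟨h2, _⟩ := hyT hby
      have hv : x.1 = y.1 := by rw [← h1, ← h2, hxy]
      exact Prod.ext hv (hbx.trans hby.symm)
  have hcard : s.card ≤ t.card := Finset.card_le_card_of_injOn F hmem hinj
  have hscard : s.card = 2 * Fintype.card V - 1 := by
    rw [hs, Finset.card_sdiff_of_subset (by simp), Finset.card_singleton, Finset.card_univ]
    simp [Fintype.card_prod, Fintype.card_bool]
    omega
  have htcard : t.card = {p : V × V | D p.1 p.2}.ncard := by
    rw [ht, Set.ncard_eq_toFinset_card']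
  omega
end

section
/- Let l ≥ 4 be an integer with l ≡ 4 (mod 6). Then the directed cycle of length l admits no homomorphism to any oriented graph on at most 3 vertices, but admits a homomorphism to the tournament T4 on vertex set {1,2,3,4} with arcs 1→2, 1→3, 2→3, 2→4, 3→4, 4→1. Consequently the oriented chromatic number of the directed cycle of length l is exactly 4. -/
/-- An oriented graph: no loops, no pair of opposite arcs. -/
structure OrientedGraph (V : Type*) where
  arc : V → V → Prop
  irrefl : ∀ v, ¬ arc v v
  asymm : ∀ u v, arc u v → ¬ arc v u

/-- The underlying simple graph of an oriented graph. -/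
def OrientedGraph.underlying {V : Type*} (G : OrientedGraph V) : SimpleGraph V where
  Adj u v := G.arc u v ∨ G.arc v u
  symm := ⟨fun _ _ h => h.symm⟩
  loopless := ⟨fun v h => h.elim (G.irrefl v) (G.irrefl v)⟩

/-- Homomorphisms of oriented graphs. -/
def OrientedGraph.IsHom {V W : Type*} (G : OrientedGraph V) (H : OrientedGraph W)
    (φ : V → W) : Prop :=
  ∀ u v, G.arc u v → H.arc (φ u) (φ v)

/-- The tournament `T4` on vertex set `{1, 2, 3, 4}` (represented by `Fin 4`, with
vertex `k+1` represented by `k`) with arcs `1→2, 1→3, 2→3, 2→4, 3→4, 4→1`. -/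
def T4 : OrientedGraph (Fin 4) where
  arc a b := (a = 0 ∧ b = 1) ∨ (a = 0 ∧ b = 2) ∨ (a = 1 ∧ b = 2) ∨
    (a = 1 ∧ b = 3) ∨ (a = 2 ∧ b = 3) ∨ (a = 3 ∧ b = 0)
  irrefl := by decide
  asymm := by decide

/-!
On at most three vertices, a directed walk `a → b → c → d` has `a, b, c` pairwise distinct
(no loops, no opposite arcs) and `d ∉ {b, c}`, so `d = a`. Every directed walk is therefore
3-periodic, and a closed walk whose length is `≡ 1 (mod 3)` would have to close with a loop.
In `T4` the 4-cycle `1 → 2 → 3 → 4 → 1` and the triangle `1 → 2 → 4 → 1` share the arc `1 → 2`,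
so the 4-cycle followed by copies of the triangle is a closed walk of every length
`l ≡ 1 (mod 3)`, `l ≥ 4`.
-/

namespace OrientedGraph

variable {W : Type*} {H : OrientedGraph W}

/-- A homomorphism from the directed cycle of length `l`, with vertex `i < l` sent to `φ i`. -/
def IsClosedWalk (H : OrientedGraph W) (l : ℕ) (φ : ℕ → W) : Prop :=
  ∀ i < l, H.arc (φ i) (φ ((i + 1) % l))

theorem ne_of_arc {u v : W} (h : H.arc u v) : u ≠ v :=
  fun e => H.irrefl u (e ▸ h)

theorem ne_of_arc_of_arc {u v w : W} (huv : H.arc u v) (hvw : H.arc v w) : u ≠ w :=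
  fun e => H.asymm u v huv (e ▸ hvw)

theorem eq_of_arc_of_arc_of_arc [Fintype W] (hcard : Fintype.card W ≤ 3) {a b c d : W}
    (hab : H.arc a b) (hbc : H.arc b c) (hcd : H.arc c d) : d = a := by
  by_contra hda
  have hnodup : [a, b, c, d].Nodup := by
    simp only [List.nodup_cons, List.mem_cons, List.not_mem_nil, or_false, not_or]
    exact ⟨⟨ne_of_arc hab, ne_of_arc_of_arc hab hbc, Ne.symm hda⟩,
      ⟨ne_of_arc hbc, ne_of_arc_of_arc hbc hcd⟩, ne_of_arc hcd, not_false, List.nodup_nil⟩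
  have := hnodup.length_le_card
  simp only [List.length_cons, List.length_nil] at this
  omega

theorem not_isClosedWalk_of_card_le_three [Fintype W] (hcard : Fintype.card W ≤ 3) {l : ℕ}
    (hl : l % 3 = 1) (φ : ℕ → W) : ¬ H.IsClosedWalk l φ := by
  intro hφ
  have harc : ∀ i, i + 1 < l → H.arc (φ i) (φ (i + 1)) := fun i hi => by
    simpa only [Nat.mod_eq_of_lt hi] using hφ i (by omega)
  have hperiodic : ∀ k, 3 * k < l → φ (3 * k) = φ 0 := by
    intro k
    induction k with
    | zero => simp
    | succ k ih =>
      intro hk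
      rw [← ih (by omega)]
      exact eq_of_arc_of_arc_of_arc hcard (harc _ (by omega)) (harc _ (by omega))
        (harc _ (by omega))
  have hlast : φ (l - 1) = φ 0 := by
    obtain ⟨k, hk⟩ : ∃ k, l - 1 = 3 * k := ⟨l / 3, by omega⟩
    rw [hk]
    exact hperiodic k (by omega)
  have hclose := hφ (l - 1) (by omega)
  rw [Nat.sub_add_cancel (by omega), Nat.mod_self, hlast] at hclose
  exact H.irrefl _ hclose

end OrientedGraph

/-- The walk `0 → 1 → 2 → 3` in `T4`, continued around the triangle `3 → 0 → 1 → 3`. -/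
def t4Walk (i : ℕ) : Fin 4 :=
  if h : i < 3 then ⟨i, by omega⟩ else if i % 3 = 0 then 3 else if i % 3 = 1 then 0 else 1

theorem T4_arc_t4Walk_succ (i : ℕ) : T4.arc (t4Walk i) (t4Walk (i + 1)) := by
  rcases lt_or_ge i 3 with hi | hi
  · interval_cases i <;> simp [t4Walk, T4]
  · have : i % 3 = 0 ∨ i % 3 = 1 ∨ i % 3 = 2 := by omega
    rcases this with h | h | h <;>
      simp [t4Walk, T4, h, Nat.add_mod, show ¬ i < 3 by omega, show ¬ i + 1 < 3 by omega]

theorem T4_isClosedWalk_t4Walk {l : ℕ} (hl : 4 ≤ l) (hl3 : l % 3 = 1) :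
    T4.IsClosedWalk l t4Walk := by
  intro i hi
  rcases (show i + 1 < l ∨ i + 1 = l by omega) with h | h
  · rw [Nat.mod_eq_of_lt h]
    exact T4_arc_t4Walk_succ i
  · have hlast : t4Walk i = 3 := by
      simp [t4Walk, show ¬ i < 3 by omega, show i % 3 = 0 by omega]
    rw [h, Nat.mod_self, hlast]
    simp [t4Walk, T4]

/-- For `l ≥ 4` with `l ≡ 4 (mod 6)`, the directed cycle of length
`l` (a homomorphism from it being a map `φ` with an arc from `φ i` to `φ ((i+1) % l)`
for all `i < l`) admits no homomorphism to any oriented graph on at most 3 vertices,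
but admits a homomorphism to the tournament `T4`; hence its oriented chromatic number
is exactly 4. -/
theorem directed_cycle_oriented_chromatic_number_eq_four (l : ℕ) (hl : 4 ≤ l)
    (hmod : l % 6 = 4) :
    (∀ (W : Type) (_ : Fintype W), Fintype.card W ≤ 3 →
      ∀ H : OrientedGraph W, ¬ ∃ φ : ℕ → W, ∀ i < l, H.arc (φ i) (φ ((i + 1) % l))) ∧
    (∃ φ : ℕ → Fin 4, ∀ i < l, T4.arc (φ i) (φ ((i + 1) % l))) := by
  have hl3 : l % 3 = 1 := by omega
  exact ⟨fun W _ hcard H ⟨φ, hφ⟩ => H.not_isClosedWalk_of_card_le_three hcard hl3 φ hφ,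
    t4Walk, T4_isClosedWalk_t4Walk hl hl3⟩
end

section
/- Let g' ≥ 4 be an even integer and let C be the oriented cycle on vertices w_1, …, w_{g'} with arcs w_{2i−1} → w_{2i} for 1 ≤ i ≤ g'/2, arcs w_{2i+1} → w_{2i} for 1 ≤ i ≤ g'/2 − 1, and the arc w_{g'} → w_1. Then there is no homomorphism φ from C to the tournament T4 on vertex set {1,2,3,4} with arcs 1→2, 1→3, 2→3, 2→4, 3→4, 4→1 such that φ(w_1) = 4. -/
/-! In `T4` the only out-neighbour of `4` is `1` and the only in-neighbour of `1` is `4`.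
Starting from `φ (w 1) = 4`, the alternating arcs of `C` therefore force `φ (w (2i-1)) = 4` and
`φ (w (2i)) = 1` all the way round, so the closing arc `w g' → w 1` would have to be `1 → 4`,
the reverse of the arc `4 → 1`. -/

theorem OrientedGraph.apply_two_mul_eq_of_zigzag {W : Type*} (H : OrientedGraph W) {a b : W}
    (hout : ∀ y, H.arc a y → y = b) (hin : ∀ x, H.arc x b → x = a) {φ : ℕ → W} {m : ℕ}
    (h1 : φ 1 = a)
    (hf : ∀ i, 1 ≤ i → i ≤ m → H.arc (φ (2 * i - 1)) (φ (2 * i)))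
    (hb : ∀ i, 1 ≤ i → i ≤ m - 1 → H.arc (φ (2 * i + 1)) (φ (2 * i)))
    {i : ℕ} (hi : 1 ≤ i) (him : i ≤ m) : φ (2 * i) = b := by
  induction i, hi using Nat.le_induction with
  | base => exact hout _ (h1 ▸ hf 1 le_rfl him)
  | succ i hi ih =>
    have hodd : φ (2 * i + 1) = a := hin _ (ih (by omega) ▸ hb i hi (by omega))
    have harc := hf (i + 1) (by omega) him
    rw [show 2 * (i + 1) - 1 = 2 * i + 1 by omega, hodd] at harc
    exact hout _ harc

theorem T4.eq_zero_of_arc_three {y : Fin 4} (h : T4.arc 3 y) : y = 0 := by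
  revert y
  unfold T4
  decide

theorem T4.eq_three_of_arc_zero {x : Fin 4} (h : T4.arc x 0) : x = 3 := by
  revert x
  unfold T4
  decide

/-- Let `g' ≥ 4` be even and let `C` be the oriented cycle on
vertices `w 1, …, w g'` with arcs `w (2i-1) → w (2i)` for `1 ≤ i ≤ g'/2`,
`w (2i+1) → w (2i)` for `1 ≤ i ≤ g'/2 - 1`, and `w g' → w 1`. Then no homomorphism
`φ` from `C` to `T4` has `φ (w 1) = 4` (vertex `4` is represented by `3 : Fin 4`). -/
theorem no_hom_of_special_oriented_cycle_to_T4_mapping_first_vertex_to_four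
    (g' : ℕ) (hg : 4 ≤ g') (heven : Even g') :
    ¬ ∃ φ : ℕ → Fin 4, φ 1 = 3 ∧
        (∀ i, 1 ≤ i → i ≤ g' / 2 → T4.arc (φ (2 * i - 1)) (φ (2 * i))) ∧
        (∀ i, 1 ≤ i → i ≤ g' / 2 - 1 → T4.arc (φ (2 * i + 1)) (φ (2 * i))) ∧
        T4.arc (φ g') (φ 1) := by
  rintro ⟨φ, h1, hf, hb, hc⟩
  obtain ⟨m, rfl⟩ := heven
  rw [show (m + m) / 2 = m by omega] at hf hb
  have hlast : φ (2 * m) = 0 :=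
    T4.apply_two_mul_eq_of_zigzag (fun _ => T4.eq_zero_of_arc_three)
      (fun _ => T4.eq_three_of_arc_zero) h1 hf hb (by omega) le_rfl
  rw [← two_mul, hlast, h1] at hc
  exact T4.asymm 3 0 (by unfold T4; decide) hc
end
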